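/- Intrinsic description of the partial ordering on the valuative tree at infinity (equivalence of conditions (ii) and (iii) of Proposition 9.15). Let K be an algebraically closed field of characteristic zero and let v, w be normalized semivaluations on R = K[z₁,z₂] centered at infinity. Then v(φ) ≤ w(φ) for every polynomial φ ∈ R if and only if v(|𝔐|) ≤ w(|𝔐|) for every free linear system 𝔐 on 𝔸². -/

import Mathlib

/-- A normalized semivaluation on `R = K[z₁,z₂]` centered at infinity: a function
`v : R → ℝ ∪ {+∞}` with `v(φψ) = v(φ)+v(ψ)`, `v(φ+ψ) ≥ min(v(φ),v(ψ))`, `v ≡ 0` on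
`K^×`, `v(0) = +∞` and `min(v(z₁), v(z₂)) = −1`. -/
def IsSemivalAtInfinity {K : Type*} [Field K] (v : MvPolynomial (Fin 2) K → EReal) : Prop :=
  (∀ φ, v φ ≠ ⊥) ∧
  (∀ φ ψ, v (φ * ψ) = v φ + v ψ) ∧
  (∀ φ ψ, min (v φ) (v ψ) ≤ v (φ + ψ)) ∧
  (∀ c : K, c ≠ 0 → v (MvPolynomial.C c) = 0) ∧
  v 0 = ⊤ ∧
  min (v (MvPolynomial.X 0)) (v (MvPolynomial.X 1)) = -1

/-!
If `w φ < v φ`, take `m > w φ` and the linear system `𝔐` spanned by `1`, `φ z₁ᵐ` and `φ z₂ᵐ`,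
which is free because it contains `1`. The normalization `min (u z₁) (u z₂) = -1` (for `u = v, w`)
gives `w(|𝔐|) ≤ w φ - m < 0`, while the ultrametric inequality gives
`v(|𝔐|) ≥ min (v φ - m) 0 > w φ - m`, so `v(|𝔐|) > w(|𝔐|)`.
-/

open MvPolynomial

theorem le_of_mem_span {R M α : Type*} [Semiring R] [AddCommMonoid M] [Module R M]
    [LinearOrder α] [OrderTop α] {v : M → α} (h_zero : v 0 = ⊤)
    (h_add : ∀ x y, min (v x) (v y) ≤ v (x + y)) (h_smul : ∀ (a : R) x, v x ≤ v (a • x))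
    {s : Set M} {b : α} (hs : ∀ x ∈ s, b ≤ v x) {x : M} (hx : x ∈ Submodule.span R s) :
    b ≤ v x := by
  induction hx using Submodule.span_induction with
  | mem x hx => exact hs x hx
  | zero => exact h_zero ▸ le_top
  | add x y _ _ hbx hby => exact (le_min hbx hby).trans (h_add x y)
  | smul a x _ hbx => exact hbx.trans (h_smul a x)

theorem EReal.exists_nat_gt {x : EReal} (hx : x ≠ ⊤) : ∃ n : ℕ, x < n := by
  induction x using EReal.rec with
  | bot => exact ⟨0, bot_lt_iff_ne_bot.2 (EReal.natCast_ne_bot 0)⟩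
  | coe r =>
    obtain ⟨n, hn⟩ := _root_.exists_nat_gt r
    exact ⟨n, mod_cast hn⟩
  | top => exact absurd rfl hx

namespace IsSemivalAtInfinity

variable {K : Type*} [Field K] {v : MvPolynomial (Fin 2) K → EReal}

theorem map_mul (hv : IsSemivalAtInfinity v) (φ ψ : MvPolynomial (Fin 2) K) :
    v (φ * ψ) = v φ + v ψ :=
  hv.2.1 φ ψ

theorem min_le_map_add (hv : IsSemivalAtInfinity v) (φ ψ : MvPolynomial (Fin 2) K) :
    min (v φ) (v ψ) ≤ v (φ + ψ) :=
  hv.2.2.1 φ ψ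

theorem map_C (hv : IsSemivalAtInfinity v) {c : K} (hc : c ≠ 0) : v (C c) = 0 :=
  hv.2.2.2.1 c hc

theorem map_zero (hv : IsSemivalAtInfinity v) : v 0 = ⊤ :=
  hv.2.2.2.2.1

theorem min_map_X (hv : IsSemivalAtInfinity v) : min (v (X 0)) (v (X 1)) = -1 :=
  hv.2.2.2.2.2

theorem map_one (hv : IsSemivalAtInfinity v) : v 1 = 0 := by
  simpa using hv.map_C one_ne_zero

theorem map_pow (hv : IsSemivalAtInfinity v) (φ : MvPolynomial (Fin 2) K) (m : ℕ) :
    v (φ ^ m) = m • v φ := by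
  induction m with
  | zero => rw [pow_zero, zero_smul, hv.map_one]
  | succ n ih => rw [pow_succ, hv.map_mul, ih, succ_nsmul]

theorem le_map_smul (hv : IsSemivalAtInfinity v) (c : K) (φ : MvPolynomial (Fin 2) K) :
    v φ ≤ v (c • φ) := by
  rcases eq_or_ne c 0 with rfl | hc
  · rw [zero_smul, hv.map_zero]
    exact le_top
  · rw [smul_eq_C_mul, hv.map_mul, hv.map_C hc, zero_add]

theorem min_map_mul_X_pow (hv : IsSemivalAtInfinity v) (φ : MvPolynomial (Fin 2) K) (m : ℕ) :
    min (v (φ * X 0 ^ m)) (v (φ * X 1 ^ m)) = v φ - m := by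
  rw [hv.map_mul, hv.map_mul, hv.map_pow, hv.map_pow, min_add_add_left,
    ← (nsmul_right_mono m).map_min, hv.min_map_X, EReal.nsmul_eq_mul, mul_neg_one (m : EReal),
    sub_eq_add_neg]

end IsSemivalAtInfinity

noncomputable def testSystem {K : Type*} [Field K] (φ : MvPolynomial (Fin 2) K) (m : ℕ) :
    Submodule K (MvPolynomial (Fin 2) K) :=
  Submodule.span K {1, φ * X 0 ^ m, φ * X 1 ^ m}

namespace testSystem

variable {K : Type*} [Field K] (φ : MvPolynomial (Fin 2) K) (m : ℕ)

theorem one_mem : (1 : MvPolynomial (Fin 2) K) ∈ testSystem φ m :=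
  Submodule.subset_span (by simp)

theorem ne_bot : testSystem φ m ≠ ⊥ :=
  (Submodule.ne_bot_iff _).2 ⟨1, one_mem φ m, one_ne_zero⟩

instance : FiniteDimensional K (testSystem φ m) :=
  FiniteDimensional.span_of_finite K (Set.toFinite _)

theorem exists_eval_ne_zero (ξ : Fin 2 → K) : ∃ ψ ∈ testSystem φ m, eval ξ ψ ≠ 0 :=
  ⟨1, one_mem φ m, by simp⟩

variable {φ} {v : MvPolynomial (Fin 2) K → EReal}

theorem sInf_le (hv : IsSemivalAtInfinity v) (hφ : φ ≠ 0) :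
    sInf (v '' {ψ | ψ ∈ testSystem φ m ∧ ψ ≠ 0}) ≤ v φ - m := by
  have mem_image (i : Fin 2) : v (φ * X i ^ m) ∈ v '' {ψ | ψ ∈ testSystem φ m ∧ ψ ≠ 0} :=
    ⟨_, ⟨Submodule.subset_span (by fin_cases i <;> simp),
      mul_ne_zero hφ (pow_ne_zero _ (X_ne_zero i))⟩, rfl⟩
  rw [← hv.min_map_mul_X_pow]
  exact le_min (_root_.sInf_le (mem_image 0)) (_root_.sInf_le (mem_image 1))

theorem le_sInf (hv : IsSemivalAtInfinity v) :
    min (v φ - m) 0 ≤ sInf (v '' {ψ | ψ ∈ testSystem φ m ∧ ψ ≠ 0}) := by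
  rw [← hv.min_map_mul_X_pow, ← hv.map_one]
  refine _root_.le_sInf ?_
  rintro _ ⟨ψ, ⟨hψ, -⟩, rfl⟩
  refine le_of_mem_span hv.map_zero hv.min_le_map_add hv.le_map_smul ?_ hψ
  rintro x (rfl | rfl | rfl)
  · exact min_le_right _ _
  · exact (min_le_left _ _).trans (min_le_left _ _)
  · exact (min_le_left _ _).trans (min_le_right _ _)

end testSystem

theorem valuative_tree_at_infinity_order_intrinsic_general {K : Type*} [Field K]
    (v w : MvPolynomial (Fin 2) K → EReal)
    (hv : IsSemivalAtInfinity v) (hw : IsSemivalAtInfinity w) :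
    (∀ φ : MvPolynomial (Fin 2) K, v φ ≤ w φ) ↔
      (∀ M : Submodule K (MvPolynomial (Fin 2) K), M ≠ ⊥ → FiniteDimensional K M →
        (∀ ξ : Fin 2 → K, ∃ φ ∈ M, MvPolynomial.eval ξ φ ≠ 0) →
        sInf (v '' {φ : MvPolynomial (Fin 2) K | φ ∈ M ∧ φ ≠ 0}) ≤
          sInf (w '' {φ : MvPolynomial (Fin 2) K | φ ∈ M ∧ φ ≠ 0})) := by
  refine ⟨fun h M _ _ _ => ?_, fun h φ => ?_⟩
  · simp only [sInf_image]
    exact iInf₂_mono fun φ _ => h φ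
  by_contra! hlt
  have hφ : φ ≠ 0 := by
    rintro rfl
    simp [hv.map_zero, hw.map_zero] at hlt
  obtain ⟨m, hm⟩ := EReal.exists_nat_gt hlt.ne_top
  have hw_neg : w φ - m < 0 := (EReal.sub_neg (.inr (EReal.natCast_ne_top m))
    (.inr (EReal.natCast_ne_bot m))).2 hm
  have hvw : w φ - m < v φ - m :=
    EReal.sub_lt_sub_of_lt_of_le hlt le_rfl (EReal.natCast_ne_bot m) (EReal.natCast_ne_top m)
  have h_inf := h (testSystem φ m) (testSystem.ne_bot φ m) inferInstance
    (testSystem.exists_eval_ne_zero φ m)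
  exact (h_inf.trans (testSystem.sInf_le m hw hφ)).not_gt
    ((lt_min hvw hw_neg).trans_le (testSystem.le_sInf m hv))

/-- **Intrinsic description of the partial ordering on the valuative tree at infinity.**
For normalized semivaluations `v, w` centered at infinity, `v(φ) ≤ w(φ)` for all
polynomials `φ` if and only if `v(|𝔐|) ≤ w(|𝔐|)` for every free linear system `𝔐`
on `𝔸²` (a nonzero finite-dimensional subspace of `R` with empty base locus), where
`v(|𝔐|) = inf {v(φ) : φ ∈ 𝔐, φ ≠ 0}`. -/
theorem valuative_tree_at_infinity_order_intrinsic {K : Type*} [Field K] [IsAlgClosed K]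
    [CharZero K]
    (v w : MvPolynomial (Fin 2) K → EReal)
    (hv : IsSemivalAtInfinity v) (hw : IsSemivalAtInfinity w) :
    (∀ φ : MvPolynomial (Fin 2) K, v φ ≤ w φ) ↔
      (∀ M : Submodule K (MvPolynomial (Fin 2) K), M ≠ ⊥ → FiniteDimensional K M →
        (∀ ξ : Fin 2 → K, ∃ φ ∈ M, MvPolynomial.eval ξ φ ≠ 0) →
        sInf (v '' {φ : MvPolynomial (Fin 2) K | φ ∈ M ∧ φ ≠ 0}) ≤
          sInf (w '' {φ : MvPolynomial (Fin 2) K | φ ∈ M ∧ φ ≠ 0})) :=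
  valuative_tree_at_infinity_order_intrinsic_general v w hv hw
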